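/- There is no measurable reduction from E₀ to equality on Cantor space: there is no measurable function f : 2^ℕ → 2^ℕ such that for all x, y, x E₀ y ↔ f(x) = f(y). -/

import Mathlib

open MeasureTheory

def E0 (x y : ℕ → Bool) : Prop := {n : ℕ | x n ≠ y n}.Finite

/-!
A measurable map is Baire measurable, so we argue by category instead of measure. An
`E₀`-invariant Baire measurable set is meagre or comeagre: if it is comeagre in a basic cylinder,
then finitely many coordinate flips carry that cylinder over the whole space. Applied to the
coordinates of a reduction `f`, this makes `f` constant on a comeagre set, which then lies in a
single `E₀`-class. But `E₀`-classes are countable, and countable sets are meagre in Cantor space.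
-/

open Filter Set Topology

instance Pi.nhdsNE_neBot {ι : Type*} [Infinite ι] {X : ι → Type*} [∀ i, TopologicalSpace (X i)]
    [∀ i, Nontrivial (X i)] (x : ∀ i, X i) : NeBot (𝓝[≠] x) := by
  classical
  rw [← mem_closure_iff_nhdsWithin_neBot]
  choose y hy using fun i => exists_ne (x i)
  have hlim : Tendsto (fun i => Function.update x i (y i)) cofinite (𝓝 x) :=
    tendsto_pi_nhds.2 fun j => tendsto_const_nhds.congr' <| by
      filter_upwards [eventually_cofinite_ne j] with i hij
      rw [Function.update_of_ne hij.symm]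
  refine mem_closure_of_tendsto hlim (Eventually.of_forall fun i hi => hy i ?_)
  simpa using congrFun hi i

theorem Set.Countable.isMeagre {X : Type*} [TopologicalSpace X] [T1Space X]
    [∀ x : X, NeBot (𝓝[≠] x)] {s : Set X} (hs : s.Countable) : IsMeagre s := by
  rw [← biUnion_of_singleton s]
  refine isMeagre_biUnion hs fun x _ => IsNowhereDense.isMeagre ?_
  rw [isClosed_singleton.isNowhereDense_iff]
  exact interior_singleton x

def flipOn (s : Finset ℕ) (x : ℕ → Bool) : ℕ → Bool := fun n => xor (decide (n ∈ s)) (x n)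

theorem flipOn_involutive (s : Finset ℕ) : Function.Involutive (flipOn s) := by
  intro x; funext n; simp [flipOn]

theorem continuous_flipOn (s : Finset ℕ) : Continuous (flipOn s) :=
  continuous_pi fun n => (continuous_of_discreteTopology (f := xor (decide (n ∈ s)))).comp
    (continuous_apply n)

def flipOnHomeomorph (s : Finset ℕ) : (ℕ → Bool) ≃ₜ (ℕ → Bool) where
  toEquiv := (flipOn_involutive s).toPerm
  continuous_toFun := continuous_flipOn s
  continuous_invFun := continuous_flipOn s

theorem setOf_ne_flipOn (s : Finset ℕ) (x : ℕ → Bool) : {n | x n ≠ flipOn s x n} = s := by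
  ext n; by_cases h : n ∈ s <;> simp [flipOn, h]

theorem E0_flipOn (s : Finset ℕ) (x : ℕ → Bool) : E0 x (flipOn s x) := by
  rw [E0, setOf_ne_flipOn]
  exact s.finite_toSet

theorem E0.exists_flipOn_eq {x y : ℕ → Bool} (h : E0 x y) : ∃ s, flipOn s x = y := by
  refine ⟨h.toFinset, funext fun n => ?_⟩
  have hn : n ∈ h.toFinset ↔ x n ≠ y n := Set.Finite.mem_toFinset h
  cases hx : x n <;> cases hy : y n <;> simp_all [flipOn]

theorem E0.countable_setOf (x : ℕ → Bool) : {y | E0 x y}.Countable :=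
  (countable_range fun s => flipOn s x).mono fun _ h => h.exists_flipOn_eq

theorem isMeagre_or_isMeagre_compl_of_E0_invariant {A : Set (ℕ → Bool)}
    (hA : BaireMeasurableSet A) (hinv : ∀ x y, E0 x y → x ∈ A → y ∈ A) :
    IsMeagre A ∨ IsMeagre Aᶜ := by
  obtain ⟨U, hUo, hAU⟩ := hA.residualEq_isOpen
  have hA_diff : IsMeagre (A \ U) := hAU.mem_iff.mono fun y hy hyAU => hyAU.2 (hy.1 hyAU.1)
  have hU_diff : IsMeagre (U \ A) := hAU.mem_iff.mono fun y hy hyUA => hyUA.2 (hy.2 hyUA.1)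
  rcases U.eq_empty_or_nonempty with rfl | ⟨x, hx⟩
  · exact .inl (by simpa using hA_diff)
  right
  obtain ⟨I, u, hxu, hIU⟩ := isOpen_pi_iff.1 hUo x hx
  -- flipping the coordinates in `I` where `y` disagrees with `x` moves `y` into the cylinder
  have hcover : Aᶜ ⊆ ⋃ s : Finset ℕ, flipOn s ⁻¹' ((I : Set ℕ).pi u \ A) := by
    intro y hy
    classical
    refine mem_iUnion.2 ⟨I.filter fun i => y i ≠ x i, fun i hi => ?_, fun hA => hy ?_⟩
    · have hxi := (hxu i hi).2
      cases hx : x i <;> cases hy : y i <;> simp_all [flipOn]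
    · simpa [flipOn_involutive _ y] using hinv _ _ (E0_flipOn (I.filter fun i => y i ≠ x i) _) hA
  refine (isMeagre_iUnion fun s => ?_).mono hcover
  exact ((hU_diff.mono (sdiff_subset_sdiff_left hIU)).preimage_of_isOpenMap (continuous_flipOn s)
    (flipOnHomeomorph s).isOpenMap)

theorem exists_eventually_eq_of_E0_invariant {f : (ℕ → Bool) → (ℕ → Bool)} (hf : Measurable f)
    (hinv : ∀ x y, E0 x y → f x = f y) : ∃ c, ∀ᶠ x in residual (ℕ → Bool), f x = c := by
  have hcoord : ∀ n, ∃ b, ∀ᶠ x in residual (ℕ → Bool), f x n = b := by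
    intro n
    have hA : MeasurableSet {x | f x n = true} := measurableSet_eq_fun (by fun_prop) (by fun_prop)
    rcases isMeagre_or_isMeagre_compl_of_E0_invariant hA.baireMeasurableSet
      (fun x y hxy hx => by rwa [mem_ofPred_eq, ← hinv x y hxy]) with h | h
    · exact ⟨false, by filter_upwards [h] with x hx using by simpa using hx⟩
    · exact ⟨true, by filter_upwards [h] with x hx using by simpa using hx⟩
  choose c hc using hcoord
  exact ⟨c, (eventually_countable_forall.2 hc).mono fun x hx => funext hx⟩

theorem stmt_6 :
    ¬ ∃ f : (ℕ → Bool) → (ℕ → Bool),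
        Measurable f ∧ ∀ x y, E0 x y ↔ f x = f y := by
  rintro ⟨f, hf, hred⟩
  obtain ⟨c, hc⟩ := exists_eventually_eq_of_E0_invariant hf fun x y => (hred x y).1
  obtain ⟨x₀, hx₀⟩ := (dense_of_mem_residual hc).nonempty
  have hclass : ∀ᶠ y in residual (ℕ → Bool), E0 x₀ y :=
    hc.mono fun y hy => (hred x₀ y).2 (hx₀.trans hy.symm)
  have hempty := inter_mem (E0.countable_setOf x₀).isMeagre hclass
  obtain ⟨y, hy⟩ := (dense_of_mem_residual hempty).nonempty
  exact hy.1 hy.2
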